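/- Let A be a Banach algebra with a bounded approximate identity and σ : A → A a continuous algebra homomorphism with dense range. If A is σ-biflat, then A is biflat. -/

import Mathlib

/-!
Let `Φ` be a weak-* cluster point in `A**` of the bounded approximate identity `(e i)` and
set `ρ λ b = Φ (ρ₀ (λ ∘ r b))`. Since `σ` has dense range and everything is continuous,
the `σ`-twisted identities of `ρ₀` turn into untwisted ones, such as
`ρ₀ ((λ ∘ r a) ∘ r b) = ρ₀ (λ ∘ r (b * a))`; these give the bimodule laws of `ρ`.
Finally `ρ (μ ∘ π) b = lim μ (σ (e i) * b) = μ b`, because the bounded net `σ (e i)` is a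
left approximate identity on the dense set `σ(A)`, hence on all of `A`.
-/

universe u

open Filter Topology

theorem exists_dual_apply_eq_of_tendsto {𝕜 E ι : Type*} [NontriviallyNormedField 𝕜]
    [ProperSpace 𝕜] [SeminormedAddCommGroup E] [NormedSpace 𝕜 E] {l : Filter ι} [l.NeBot]
    {e : ι → E} {C : ℝ} (he : ∀ i, ‖e i‖ ≤ C) :
    ∃ Φ : (E →L[𝕜] 𝕜) →L[𝕜] 𝕜,
      ∀ μ z, Tendsto (fun i => μ (e i)) l (𝓝 z) → Φ μ = z := by
  let U := Ultrafilter.of l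
  have hbound (μ : E →L[𝕜] 𝕜) (i : ι) : ‖μ (e i)‖ ≤ C * ‖μ‖ :=
    (μ.le_opNorm _).trans (by rw [mul_comm]; gcongr; exact he i)
  have hconv (μ : E →L[𝕜] 𝕜) : ∃ z, Tendsto (fun i => μ (e i)) U (𝓝 z) := by
    obtain ⟨z, -, hz⟩ := (isCompact_closedBall (0 : 𝕜) (C * ‖μ‖)).ultrafilter_le_nhds
      (U.map fun i => μ (e i)) (le_principal_iff.2 <| mem_map.2 <| univ_mem' fun i => by
        simpa using hbound μ i)
    exact ⟨z, hz⟩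
  choose Φ hΦ using hconv
  have hΦ_eq {μ z} (h : Tendsto (fun i => μ (e i)) U (𝓝 z)) : Φ μ = z :=
    tendsto_nhds_unique (hΦ μ) h
  let Φₗ : (E →L[𝕜] 𝕜) →ₗ[𝕜] 𝕜 :=
    { toFun := Φ
      map_add' := fun μ ν => hΦ_eq <| by simpa using (hΦ μ).add (hΦ ν)
      map_smul' := fun c μ => hΦ_eq <| by simpa using (hΦ μ).const_smul c }
  exact ⟨Φₗ.mkContinuous C fun μ => le_of_tendsto (hΦ μ).norm (.of_forall (hbound μ)),
    fun μ z h => hΦ_eq (h.mono_left (Ultrafilter.of_le l))⟩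

theorem tendsto_mul_of_forall_mem_dense {A ι : Type*} [NonUnitalSeminormedRing A]
    {l : Filter ι} {f : ι → A} {C : ℝ} (hf : ∀ i, ‖f i‖ ≤ C) {s : Set A} (hs : Dense s)
    (h : ∀ a ∈ s, Tendsto (fun i => f i * a) l (𝓝 a)) (b : A) :
    Tendsto (fun i => f i * b) l (𝓝 b) := by
  have hlip (i : ι) : LipschitzWith C.toNNReal (f i * ·) :=
    LipschitzWith.of_dist_le_mul fun x y => by
      rw [dist_eq_norm, dist_eq_norm, ← mul_sub]
      exact (norm_mul_le _ _).trans (by gcongr; exact (hf i).trans (C.le_coe_toNNReal))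
  have hclosed : IsClosed {b : A | Tendsto (fun i => f i * b) l (𝓝 b)} :=
    (LipschitzWith.uniformEquicontinuous _ _ hlip).equicontinuous.isClosed_setOfPred_tendsto
      continuous_id
  exact hclosed.closure_subset_iff.2 h (hs b)

section

variable {𝕜 A E : Type*} [NontriviallyNormedField 𝕜] [NonUnitalNormedRing A]
  [NormedSpace 𝕜 A] [SeminormedAddCommGroup E] [NormedSpace 𝕜 E]

theorem tendsto_map_mul_of_denseRange {σ : A →L[𝕜] A} (hσ : ∀ a b, σ (a * b) = σ a * σ b)
    (hdense : DenseRange σ) {ι : Type*} {F : Filter ι} {e : ι → A} {C : ℝ}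
    (he : ∀ i, ‖e i‖ ≤ C) (hleft : ∀ a, Tendsto (fun i => e i * a) F (𝓝 a)) (b : A) :
    Tendsto (fun i => σ (e i) * b) F (𝓝 b) := by
  refine tendsto_mul_of_forall_mem_dense (C := ‖σ‖ * C)
    (fun i => (σ.le_opNorm (e i)).trans (by gcongr; exact he i)) hdense ?_ b
  rintro _ ⟨s, rfl⟩
  simpa only [Function.comp_def, hσ] using (σ.continuous.tendsto s).comp (hleft s)

/-- Condition (1) together with `ρ ∘ π* = σ*`, the dual actions written out:
`lam.comp (r (σ a))` is `σ(a) · lam`, and `(a · ρ lam) b = ρ lam (b * a)`. -/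
structure IsSigmaBiflatMap (σ : A →L[𝕜] A) (l r : A →L[𝕜] E →L[𝕜] E) (pr : E →L[𝕜] A)
    (ρ : (E →L[𝕜] 𝕜) →L[𝕜] A →L[𝕜] 𝕜) : Prop where
  apply_comp_right (a : A) (lam : E →L[𝕜] 𝕜) (b : A) :
    ρ (lam.comp (r (σ a))) b = ρ lam (b * a)
  apply_comp_left (a : A) (lam : E →L[𝕜] 𝕜) (b : A) :
    ρ (lam.comp (l (σ a))) b = ρ lam (a * b)
  comp_pr (μ : A →L[𝕜] 𝕜) : ρ (μ.comp pr) = μ.comp σ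

noncomputable def biflatMapOfLimit (Φ : (A →L[𝕜] 𝕜) →L[𝕜] 𝕜)
    (ρ : (E →L[𝕜] 𝕜) →L[𝕜] A →L[𝕜] 𝕜) (r : A →L[𝕜] E →L[𝕜] E) : (E →L[𝕜] 𝕜) →L[𝕜] A →L[𝕜] 𝕜 :=
  (ContinuousLinearMap.compL 𝕜 A (E →L[𝕜] 𝕜) 𝕜 (Φ.comp ρ)).comp
    (((ContinuousLinearMap.compL 𝕜 A (E →L[𝕜] E) (E →L[𝕜] 𝕜)).flip r).comp
      (ContinuousLinearMap.compL 𝕜 E E 𝕜))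

theorem biflatMapOfLimit_apply (Φ : (A →L[𝕜] 𝕜) →L[𝕜] 𝕜)
    (ρ : (E →L[𝕜] 𝕜) →L[𝕜] A →L[𝕜] 𝕜) (r : A →L[𝕜] E →L[𝕜] E) (lam : E →L[𝕜] 𝕜) (b : A) :
    biflatMapOfLimit Φ ρ r lam b = Φ (ρ (lam.comp (r b))) :=
  rfl

namespace IsSigmaBiflatMap

variable {σ : A →L[𝕜] A} {l r : A →L[𝕜] E →L[𝕜] E} {pr : E →L[𝕜] A}
  {ρ : (E →L[𝕜] 𝕜) →L[𝕜] A →L[𝕜] 𝕜}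

theorem comp_right_comp_right (hρ : IsSigmaBiflatMap σ l r pr ρ)
    (hσ : ∀ a b, σ (a * b) = σ a * σ b) (hdense : DenseRange σ) (lam : E →L[𝕜] 𝕜) (a b : A) :
    ρ ((lam.comp (r a)).comp (r b)) = ρ (lam.comp (r (b * a))) := by
  have hagree := (hdense.prodMap hdense).equalizer
    (g := fun p : A × A => ρ ((lam.comp (r p.1)).comp (r p.2)))
    (h := fun p : A × A => ρ (lam.comp (r (p.2 * p.1)))) (by fun_prop) (by fun_prop) <| by
      ext ⟨t, d⟩ c
      simp only [Function.comp_apply, Prod.map_apply, ← hσ, hρ.apply_comp_right, mul_assoc]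
  exact congrFun hagree (a, b)

theorem comp_left_comp_right (hρ : IsSigmaBiflatMap σ l r pr ρ) (hdense : DenseRange σ)
    (lam : E →L[𝕜] 𝕜) (a b : A) :
    ρ ((lam.comp (l a)).comp (r b)) = ρ ((lam.comp (r b)).comp (l a)) := by
  have hagree := (hdense.prodMap hdense).equalizer
    (g := fun p : A × A => ρ ((lam.comp (l p.1)).comp (r p.2)))
    (h := fun p : A × A => ρ ((lam.comp (r p.2)).comp (l p.1)))
    (by fun_prop) (by fun_prop) <| by
      ext ⟨s, t⟩ c
      simp only [Function.comp_apply, Prod.map_apply, hρ.apply_comp_right, hρ.apply_comp_left,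
        mul_assoc]
  exact congrFun hagree (a, b)

variable {ι : Type*} {F : Filter ι} {e : ι → A} {C : ℝ} {Φ : (A →L[𝕜] 𝕜) →L[𝕜] 𝕜}

theorem limit_apply_comp_right (hρ : IsSigmaBiflatMap σ l r pr ρ)
    (hleft : ∀ a, Tendsto (fun i => e i * a) F (𝓝 a))
    (hΦ : ∀ μ z, Tendsto (fun i => μ (e i)) F (𝓝 z) → Φ μ = z) (lam : E →L[𝕜] 𝕜) (a : A) :
    Φ (ρ (lam.comp (r (σ a)))) = ρ lam a :=
  hΦ _ _ <| by
    simpa only [Function.comp_def, hρ.apply_comp_right] using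
      ((ρ lam).continuous.tendsto a).comp (hleft a)

theorem limit_apply_comp_left (hρ : IsSigmaBiflatMap σ l r pr ρ)
    (hright : ∀ a, Tendsto (fun i => a * e i) F (𝓝 a))
    (hΦ : ∀ μ z, Tendsto (fun i => μ (e i)) F (𝓝 z) → Φ μ = z) (lam : E →L[𝕜] 𝕜) (a : A) :
    Φ (ρ (lam.comp (l (σ a)))) = ρ lam a :=
  hΦ _ _ <| by
    simpa only [Function.comp_def, hρ.apply_comp_left] using
      ((ρ lam).continuous.tendsto a).comp (hright a)

variable [IsScalarTower 𝕜 A A] [SMulCommClass 𝕜 A A]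

theorem comp_pr_comp_right (hρ : IsSigmaBiflatMap σ l r pr ρ)
    (hσ : ∀ a b, σ (a * b) = σ a * σ b) (hdense : DenseRange σ) (μ : A →L[𝕜] 𝕜) (x : A) :
    ρ ((μ.comp pr).comp (r x)) =
      ρ ((μ.comp ((ContinuousLinearMap.mul 𝕜 A).flip x)).comp pr) := by
  have hagree := hdense.equalizer (g := fun x => ρ ((μ.comp pr).comp (r x)))
    (h := fun x => ρ ((μ.comp ((ContinuousLinearMap.mul 𝕜 A).flip x)).comp pr))
    (by fun_prop) (by fun_prop) <| by
      ext d c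
      simp [hρ.apply_comp_right, hρ.comp_pr, hσ]
  exact congrFun hagree x

theorem isSigmaBiflatMap_id_biflatMapOfLimit (hρ : IsSigmaBiflatMap σ l r pr ρ)
    (hσ : ∀ a b, σ (a * b) = σ a * σ b) (hdense : DenseRange σ) (he : ∀ i, ‖e i‖ ≤ C)
    (hleft : ∀ a, Tendsto (fun i => e i * a) F (𝓝 a))
    (hright : ∀ a, Tendsto (fun i => a * e i) F (𝓝 a))
    (hΦ : ∀ μ z, Tendsto (fun i => μ (e i)) F (𝓝 z) → Φ μ = z) :
    IsSigmaBiflatMap (.id 𝕜 A) l r pr (biflatMapOfLimit Φ ρ r) where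
  apply_comp_right a lam b := by
    simp only [ContinuousLinearMap.id_apply, biflatMapOfLimit_apply,
      hρ.comp_right_comp_right hσ hdense]
  apply_comp_left a lam b := by
    have hagree := hdense.equalizer (g := fun a => biflatMapOfLimit Φ ρ r (lam.comp (l a)) b)
      (h := fun a => biflatMapOfLimit Φ ρ r lam (a * b)) (by fun_prop) (by fun_prop) <| by
        ext s
        simp only [Function.comp_apply, biflatMapOfLimit_apply, hρ.comp_left_comp_right hdense,
          ← hρ.comp_right_comp_right hσ hdense, hρ.limit_apply_comp_left hright hΦ,
          hρ.limit_apply_comp_right hleft hΦ]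
    exact congrFun hagree a
  comp_pr μ := by
    ext b
    rw [biflatMapOfLimit_apply, hρ.comp_pr_comp_right hσ hdense, hρ.comp_pr]
    exact hΦ _ _ ((μ.continuous.tendsto b).comp
      (tendsto_map_mul_of_denseRange hσ hdense he hleft b))

end IsSigmaBiflatMap

end

theorem sigma_biflat_implies_biflat_of_denseRange
    -- A is a Banach algebra
    (A : Type u) [NonUnitalNormedRing A] [NormedSpace ℂ A]
    [IsScalarTower ℂ A A] [SMulCommClass ℂ A A]
    -- σ is a continuous algebra homomorphism on A with dense range
    (σ : A →L[ℂ] A) (hσ : ∀ a b : A, σ (a * b) = σ a * σ b)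
    (hdense : DenseRange ⇑σ)
    -- A has a bounded approximate identity (a bounded net)
    (ι : Type u) [Preorder ι] [IsDirected ι (· ≤ ·)] [Nonempty ι]
    (e : ι → A) (Cb : ℝ) (hCb : ∀ i, ‖e i‖ ≤ Cb)
    (hbai : ∀ a : A, Tendsto (fun i => e i * a) atTop (nhds a) ∧
                     Tendsto (fun i => a * e i) atTop (nhds a))
    -- E is the projective tensor product A ⊗̂ A
    (E : Type u) [NormedAddCommGroup E] [NormedSpace ℂ E]
    -- the A-bimodule actions on E
    (l r : A →L[ℂ] E →L[ℂ] E)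
    -- the diagonal map π
    (pr : E →L[ℂ] A)
    -- A is σ-biflat
    (hsbiflat : ∃ ρ₀ : (E →L[ℂ] ℂ) →L[ℂ] (A →L[ℂ] ℂ),
      (∀ (a : A) (lam : E →L[ℂ] ℂ) (b : A),
        ρ₀ (lam.comp (r (σ a))) b = ρ₀ lam (b * a)) ∧
      (∀ (a : A) (lam : E →L[ℂ] ℂ) (b : A),
        ρ₀ (lam.comp (l (σ a))) b = ρ₀ lam (a * b)) ∧
      (∀ mu : A →L[ℂ] ℂ, ρ₀ (mu.comp pr) = mu.comp σ)) :
    -- Then A is biflat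
    ∃ ρ : (E →L[ℂ] ℂ) →L[ℂ] (A →L[ℂ] ℂ),
      (∀ (a : A) (lam : E →L[ℂ] ℂ) (b : A),
        ρ (lam.comp (r a)) b = ρ lam (b * a)) ∧
      (∀ (a : A) (lam : E →L[ℂ] ℂ) (b : A),
        ρ (lam.comp (l a)) b = ρ lam (a * b)) ∧
      (∀ mu : A →L[ℂ] ℂ, ρ (mu.comp pr) = mu) := by
  obtain ⟨ρ₀, h_right, h_left, h_pr⟩ := hsbiflat
  obtain ⟨Φ, hΦ⟩ := exists_dual_apply_eq_of_tendsto (𝕜 := ℂ) (l := atTop) hCb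
  have hρ := (IsSigmaBiflatMap.mk h_right h_left h_pr).isSigmaBiflatMap_id_biflatMapOfLimit
    hσ hdense hCb (fun a => (hbai a).1) (fun a => (hbai a).2) hΦ
  exact ⟨_, hρ.apply_comp_right, hρ.apply_comp_left, fun μ => (hρ.comp_pr μ).trans μ.comp_id⟩
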